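/- arXiv:0907.4553 — 2 statements merged into one kernel-verified Lean document; each statement's English description precedes it below -/
import Mathlib

section
/- A semi-monoidal category possessing a unit object (I, α) (a cancellable pseudo-idempotent) admits the structure of a monoidal category in the classical sense, with unit I, left unitor λ and right unitor ρ induced by α. -/
/-!
Cancellability makes `I ⊗ -` and `- ⊗ I` fully faithful, so the natural isomorphism
`I ⊗ (I ⊗ X) = (I ⊗ I) ⊗ X ≅ I ⊗ X` induced by `α` has a unique preimage `λ : I ⊗ - ≅ 𝟭`,
and symmetrically `ρ : - ⊗ I ≅ 𝟭`; their naturality comes for free. The associator is an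
identity, so the pentagon is trivial. For the triangle, the defining equations of `λ` and `ρ`
turn both `ρ_X ⊗ (I ⊗ Y)` and `(X ⊗ I) ⊗ λ_Y` into `X ⊗ α ⊗ Y`; by the interchange law
`(ρ_X ⊗ (I ⊗ Y)) ≫ (X ⊗ λ_Y) = ((X ⊗ I) ⊗ λ_Y) ≫ (ρ_X ⊗ Y)`, and cancelling the isomorphism
`(X ⊗ I) ⊗ λ_Y` gives `X ⊗ λ_Y = ρ_X ⊗ Y`.
-/

open CategoryTheory

universe v u

/-- A semi-monoidal category: a category with an associative tensor product (strictly
associative on objects, with the corresponding compatibility on morphisms), no unit assumed. -/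
structure SemiMonoidalCategory (C : Type u) [Category.{v} C] where
  ten : C → C → C
  tHom : ∀ {X Y Z W : C}, (X ⟶ Y) → (Z ⟶ W) → (ten X Z ⟶ ten Y W)
  tHom_id : ∀ (X Z : C), tHom (𝟙 X) (𝟙 Z) = 𝟙 (ten X Z)
  tHom_comp : ∀ {X₁ X₂ X₃ Y₁ Y₂ Y₃ : C} (f : X₁ ⟶ X₂) (f' : X₂ ⟶ X₃)
    (g : Y₁ ⟶ Y₂) (g' : Y₂ ⟶ Y₃),
    tHom (f ≫ f') (g ≫ g') = tHom f g ≫ tHom f' g'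
  assoc : ∀ (X Y Z : C), ten (ten X Y) Z = ten X (ten Y Z)
  assoc_nat : ∀ {X X' Y Y' Z Z' : C} (f : X ⟶ X') (g : Y ⟶ Y') (h : Z ⟶ Z'),
    tHom (tHom f g) h =
      eqToHom (assoc X Y Z) ≫ tHom f (tHom g h) ≫ eqToHom (assoc X' Y' Z').symm

namespace SemiMonoidalCategory

variable {C : Type u} [Category.{v} C] (M : SemiMonoidalCategory C)

/-- An object is cancellable if tensoring with it on either side is a fully faithful
endofunctor, i.e. bijective on hom-sets. -/
def CancellableObj (I : C) : Prop :=
  (∀ X Y : C, Function.Bijective fun f : X ⟶ Y => M.tHom (𝟙 I) f) ∧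
  (∀ X Y : C, Function.Bijective fun f : X ⟶ Y => M.tHom f (𝟙 I))

/-- A unit object is a cancellable pseudo-idempotent: `α : I ⊗ I ≅ I` an isomorphism with `I`
cancellable. -/
def IsUnitObj (I : C) (α : M.ten I I ⟶ I) : Prop :=
  M.CancellableObj I ∧ IsIso α

/-- Tensoring with `I` on the left, as an endofunctor. -/
def lTensor (I : C) : C ⥤ C where
  obj X := M.ten I X
  map f := M.tHom (𝟙 I) f
  map_id X := M.tHom_id I X
  map_comp {X Y Z} f g := by
    have := M.tHom_comp (𝟙 I) (𝟙 I) f g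
    simpa using this

/-- Tensoring with `I` on the right, as an endofunctor. -/
def rTensor (I : C) : C ⥤ C where
  obj X := M.ten X I
  map f := M.tHom f (𝟙 I)
  map_id X := M.tHom_id X I
  map_comp {X Y Z} f g := by
    have := M.tHom_comp f g (𝟙 I) (𝟙 I)
    simpa using this

end SemiMonoidalCategory

open CategoryTheory SemiMonoidalCategory

namespace SemiMonoidalCategory

variable {C : Type u} [Category.{v} C] (M : SemiMonoidalCategory C)

@[simp]
theorem lTensor_obj (I X : C) : (M.lTensor I).obj X = M.ten I X := rfl

@[simp]
theorem lTensor_map (I : C) {X Y : C} (f : X ⟶ Y) : (M.lTensor I).map f = M.tHom (𝟙 I) f := rfl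

@[simp]
theorem rTensor_obj (I X : C) : (M.rTensor I).obj X = M.ten X I := rfl

@[simp]
theorem rTensor_map (I : C) {X Y : C} (f : X ⟶ Y) : (M.rTensor I).map f = M.tHom f (𝟙 I) := rfl

theorem tHom_def {X₁ Y₁ X₂ Y₂ : C} (f : X₁ ⟶ Y₁) (g : X₂ ⟶ Y₂) :
    M.tHom f g = M.tHom f (𝟙 X₂) ≫ M.tHom (𝟙 Y₁) g := by
  rw [← M.tHom_comp, Category.comp_id, Category.id_comp]

theorem tHom_def' {X₁ Y₁ X₂ Y₂ : C} (f : X₁ ⟶ Y₁) (g : X₂ ⟶ Y₂) :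
    M.tHom f g = M.tHom (𝟙 X₁) g ≫ M.tHom f (𝟙 Y₂) := by
  rw [← M.tHom_comp, Category.comp_id, Category.id_comp]

@[simp]
theorem tHom_comp_id {X₁ X₂ X₃ : C} (f : X₁ ⟶ X₂) (f' : X₂ ⟶ X₃) (Y : C) :
    M.tHom (f ≫ f') (𝟙 Y) = M.tHom f (𝟙 Y) ≫ M.tHom f' (𝟙 Y) :=
  (M.rTensor Y).map_comp f f'

@[simp]
theorem tHom_id_comp (X : C) {Y₁ Y₂ Y₃ : C} (g : Y₁ ⟶ Y₂) (g' : Y₂ ⟶ Y₃) :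
    M.tHom (𝟙 X) (g ≫ g') = M.tHom (𝟙 X) g ≫ M.tHom (𝟙 X) g' :=
  (M.lTensor X).map_comp g g'

@[simp]
theorem tHom_eqToHom_id {X Y : C} (e : X = Y) (Z : C) :
    M.tHom (eqToHom e) (𝟙 Z) = eqToHom (congrArg (M.ten · Z) e) := by
  subst e
  exact M.tHom_id X Z

@[simp]
theorem tHom_id_eqToHom (X : C) {Y Z : C} (e : Y = Z) :
    M.tHom (𝟙 X) (eqToHom e) = eqToHom (congrArg (M.ten X) e) := by
  subst e
  exact M.tHom_id X Y

theorem id_ten_tHom (X Y : C) {Z Z' : C} (f : Z ⟶ Z') :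
    M.tHom (𝟙 (M.ten X Y)) f =
      eqToHom (M.assoc X Y Z) ≫ M.tHom (𝟙 X) (M.tHom (𝟙 Y) f) ≫ eqToHom (M.assoc X Y Z').symm := by
  rw [← M.assoc_nat, M.tHom_id]

theorem tHom_id_ten {X X' : C} (f : X ⟶ X') (Y Z : C) :
    M.tHom f (𝟙 (M.ten Y Z)) =
      eqToHom (M.assoc X Y Z).symm ≫ M.tHom (M.tHom f (𝟙 Y)) (𝟙 Z) ≫ eqToHom (M.assoc X' Y Z) := by
  simp [M.assoc_nat, M.tHom_id]

@[simps!]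
def lTensorCompIso (X Y : C) : M.lTensor Y ⋙ M.lTensor X ≅ M.lTensor (M.ten X Y) :=
  NatIso.ofComponents (fun Z => eqToIso (M.assoc X Y Z).symm) fun f => by
    simp [M.id_ten_tHom]

@[simps!]
def rTensorCompIso (X Y : C) : M.rTensor X ⋙ M.rTensor Y ≅ M.rTensor (M.ten X Y) :=
  NatIso.ofComponents (fun Z => eqToIso (M.assoc Z X Y)) fun f => by
    simp [M.tHom_id_ten]

@[simps!]
def lTensorIso {X Y : C} (e : X ≅ Y) : M.lTensor X ≅ M.lTensor Y :=
  NatIso.ofComponents (fun Z => (M.rTensor Z).mapIso e) fun g =>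
    (M.tHom_def' e.hom g).symm.trans (M.tHom_def e.hom g)

@[simps!]
def rTensorIso {X Y : C} (e : X ≅ Y) : M.rTensor X ≅ M.rTensor Y :=
  NatIso.ofComponents (fun Z => (M.lTensor Z).mapIso e) fun f =>
    (M.tHom_def f e.hom).symm.trans (M.tHom_def' f e.hom)

variable {I : C}

def IsLeftUnitor (α : M.ten I I ⟶ I) {X : C} (l : M.ten I X ⟶ X) : Prop :=
  M.tHom (𝟙 I) l = eqToHom (M.assoc I I X).symm ≫ M.tHom α (𝟙 X)

def IsRightUnitor (α : M.ten I I ⟶ I) {X : C} (r : M.ten X I ⟶ X) : Prop :=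
  M.tHom r (𝟙 I) = eqToHom (M.assoc X I I) ≫ M.tHom (𝟙 X) α

variable {M} {α : M.ten I I ⟶ I}

theorem IsRightUnitor.tHom_id_ten {X Y : C} {r : M.ten X I ⟶ X} {l : M.ten I Y ⟶ Y}
    (hr : M.IsRightUnitor α r) (hl : M.IsLeftUnitor α l) :
    M.tHom r (𝟙 (M.ten I Y)) = M.tHom (𝟙 (M.ten X I)) l ≫ eqToHom (M.assoc X I Y) := by
  rw [M.tHom_id_ten, hr, M.id_ten_tHom, hl]
  simp [M.assoc_nat]

theorem IsRightUnitor.triangle {X Y : C} {r : M.ten X I ⟶ X} {l : M.ten I Y ≅ Y}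
    (hr : M.IsRightUnitor α r) (hl : M.IsLeftUnitor α l.hom) :
    eqToHom (M.assoc X I Y) ≫ M.tHom (𝟙 X) l.hom = M.tHom r (𝟙 Y) := by
  have interchange := (M.tHom_def r l.hom).symm.trans (M.tHom_def' r l.hom)
  rw [hr.tHom_id_ten hl, Category.assoc] at interchange
  exact cancel_epi ((M.lTensor _).map l.hom) |>.mp interchange

variable (M)

noncomputable def fullyFaithfulLTensor
    (hI : ∀ X Y : C, Function.Bijective fun f : X ⟶ Y => M.tHom (𝟙 I) f) :
    (M.lTensor I).FullyFaithful where
  preimage {X Y} := (Equiv.ofBijective _ (hI X Y)).symm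
  map_preimage {X Y} := (Equiv.ofBijective _ (hI X Y)).apply_symm_apply
  preimage_map {X Y} := (Equiv.ofBijective _ (hI X Y)).symm_apply_apply

noncomputable def fullyFaithfulRTensor
    (hI : ∀ X Y : C, Function.Bijective fun f : X ⟶ Y => M.tHom f (𝟙 I)) :
    (M.rTensor I).FullyFaithful where
  preimage {X Y} := (Equiv.ofBijective _ (hI X Y)).symm
  map_preimage {X Y} := (Equiv.ofBijective _ (hI X Y)).apply_symm_apply
  preimage_map {X Y} := (Equiv.ofBijective _ (hI X Y)).symm_apply_apply

noncomputable def leftUnitor (hI : (M.lTensor I).FullyFaithful) (α : M.ten I I ≅ I) :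
    M.lTensor I ≅ 𝟭 C :=
  (hI.whiskeringRight C).preimageIso
    (M.lTensorCompIso I I ≪≫ M.lTensorIso α ≪≫ (Functor.leftUnitor _).symm)

noncomputable def rightUnitor (hI : (M.rTensor I).FullyFaithful) (α : M.ten I I ≅ I) :
    M.rTensor I ≅ 𝟭 C :=
  (hI.whiskeringRight C).preimageIso
    (M.rTensorCompIso I I ≪≫ M.rTensorIso α ≪≫ (Functor.leftUnitor _).symm)

theorem isLeftUnitor_leftUnitor (hI : (M.lTensor I).FullyFaithful) (α : M.ten I I ≅ I) (X : C) :
    M.IsLeftUnitor α.hom ((M.leftUnitor hI α).app X).hom := by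
  dsimp only [leftUnitor]
  exact (hI.map_preimage _).trans (by simp)

theorem isRightUnitor_rightUnitor (hI : (M.rTensor I).FullyFaithful) (α : M.ten I I ≅ I)
    (X : C) : M.IsRightUnitor α.hom ((M.rightUnitor hI α).app X).hom := by
  dsimp only [rightUnitor]
  exact (hI.map_preimage _).trans (by simp)

noncomputable abbrev toMonoidalCategory (hl : (M.lTensor I).FullyFaithful)
    (hr : (M.rTensor I).FullyFaithful) (α : M.ten I I ≅ I) : MonoidalCategory C where
  tensorObj := M.ten
  whiskerLeft X _ _ g := M.tHom (𝟙 X) g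
  whiskerRight f Y := M.tHom f (𝟙 Y)
  tensorHom := M.tHom
  tensorUnit := I
  associator X Y Z := eqToIso (M.assoc X Y Z)
  leftUnitor := (M.leftUnitor hl α).app
  rightUnitor := (M.rightUnitor hr α).app
  tensorHom_def := M.tHom_def
  id_tensorHom_id := M.tHom_id
  tensorHom_comp_tensorHom f₁ f₂ g₁ g₂ := (M.tHom_comp f₁ g₁ f₂ g₂).symm
  whiskerLeft_id := M.tHom_id
  id_whiskerRight := M.tHom_id
  associator_naturality f₁ f₂ f₃ := by simp [M.assoc_nat]
  leftUnitor_naturality f := (M.leftUnitor hl α).hom.naturality f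
  rightUnitor_naturality f := (M.rightUnitor hr α).hom.naturality f
  pentagon W X Y Z := by simp
  triangle X Y :=
    (M.isRightUnitor_rightUnitor hr α X).triangle (M.isLeftUnitor_leftUnitor hl α Y)

end SemiMonoidalCategory

/-- A semi-monoidal category possessing a unit object `(I, α)` (a cancellable
pseudo-idempotent) admits the structure of a monoidal category in the classical sense, with
the same tensor product, unit object `I`, and left and right unitors induced by `α`
(characterized by `I ⊗ λ_X = α ⊗ X` and `ρ_X ⊗ I = X ⊗ α`, modulo associators). -/
theorem semiMonoidal_with_unit_is_monoidal
    {C : Type*} [Category C] (M : SemiMonoidalCategory C)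
    {I : C} {α : M.ten I I ⟶ I} (h : M.IsUnitObj I α) :
    ∃ (mc : MonoidalCategory C) (hten : mc.tensorObj = M.ten)
      (hunit : mc.tensorUnit = I),
      HEq (@MonoidalCategoryStruct.tensorHom C _ mc.toMonoidalCategoryStruct)
          (@SemiMonoidalCategory.tHom C _ M) ∧
      (∀ X : C,
        M.tHom (𝟙 I)
            (eqToHom (show M.ten I X = mc.tensorObj mc.tensorUnit X by rw [hten, hunit]) ≫
              (mc.leftUnitor X).hom) =
          eqToHom (M.assoc I I X).symm ≫ M.tHom α (𝟙 X)) ∧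
      (∀ X : C,
        M.tHom
            (eqToHom (show M.ten X I = mc.tensorObj X mc.tensorUnit by rw [hten, hunit]) ≫
              (mc.rightUnitor X).hom)
            (𝟙 I) =
          eqToHom (M.assoc X I I) ≫ M.tHom (𝟙 X) α) := by
  have : IsIso α := h.2
  let hl := M.fullyFaithfulLTensor h.1.1
  let hr := M.fullyFaithfulRTensor h.1.2
  refine ⟨M.toMonoidalCategory hl hr (asIso α), rfl, rfl, by rfl, fun X => ?_, fun X => ?_⟩
  · exact (congrArg (M.tHom (𝟙 I)) (Category.id_comp _)).trans
      (M.isLeftUnitor_leftUnitor hl (asIso α) X)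
  · exact (congrArg (M.tHom · (𝟙 I)) (Category.id_comp _)).trans
      (M.isRightUnitor_rightUnitor hr (asIso α) X)
end

section
/- If I₀ and I₁ are cancellable objects of a strict semi-monoidal 2-category C and i : I₀ → I₁ is an equi-arrow, then i, viewed as an object of the arrow 2-category C^2 (with its inherited tensor product), is cancellable: tensoring with i on either side is a fully faithful 2-functor on C^2. -/
/-!
For an equi-arrow `i : I₀ ⟶ I₁` with pseudo-inverse `i'`, the functor `η ↦ 1_i ⊗ η` on
hom-categories is fully faithful: followed by whiskering with `i' ⊗ 1`, which is faithful because
`i' ⊗ 1` has an inverse up to isomorphism, it becomes isomorphic to `1_{I₀} ⊗ -`, an equivalence by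
cancellability of `I₀`. The 2-cell of a square tensored with `i` is `1_i ⊗` its 2-cell up to
coherence, so it determines that 2-cell uniquely; the edges of a square and the components of a
cylinder are recovered from the cancellability of `I₀` and `I₁`. Tensoring on the right is
tensoring on the left for the tensor product with its factors swapped.
-/

open CategoryTheory

universe w v u

section Two
variable {B : Type u} [Bicategory.{w, v} B] [Bicategory.Strict B]

open Bicategory

/-- A 1-cell admitting a pseudo-inverse. -/
def IsEquiArrow {a b : B} (f : a ⟶ b) : Prop :=
  ∃ g : b ⟶ a, Nonempty (f ≫ g ≅ 𝟙 a) ∧ Nonempty (g ≫ f ≅ 𝟙 b)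

/-- A strict (2-functorial, strictly associative) tensor product on a strict 2-category. -/
structure Tensor2 (B : Type u) [Bicategory.{w, v} B] [Bicategory.Strict B] where
  obj : B → B → B
  hom : ∀ {a b c d : B}, (a ⟶ b) → (c ⟶ d) → (obj a c ⟶ obj b d)
  cell : ∀ {a b c d : B} {f f' : a ⟶ b} {g g' : c ⟶ d},
    (f ⟶ f') → (g ⟶ g') → (hom f g ⟶ hom f' g')
  hom_id : ∀ (a c : B), hom (𝟙 a) (𝟙 c) = 𝟙 (obj a c)
  hom_comp : ∀ {a b c a' b' c' : B} (f : a ⟶ b) (g : b ⟶ c) (f' : a' ⟶ b') (g' : b' ⟶ c'),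
    hom (f ≫ g) (f' ≫ g') = hom f f' ≫ hom g g'
  cell_id : ∀ {a b c d : B} (f : a ⟶ b) (g : c ⟶ d), cell (𝟙 f) (𝟙 g) = 𝟙 (hom f g)
  cell_comp : ∀ {a b c d : B} {f f' f'' : a ⟶ b} {g g' g'' : c ⟶ d}
    (η : f ⟶ f') (η' : f' ⟶ f'') (θ : g ⟶ g') (θ' : g' ⟶ g''),
    cell (η ≫ η') (θ ≫ θ') = cell η θ ≫ cell η' θ'
  cell_whisker : ∀ {a b c a' b' c' : B} {f₁ f₂ : a ⟶ b} {g₁ g₂ : b ⟶ c}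
    {f₁' f₂' : a' ⟶ b'} {g₁' g₂' : b' ⟶ c'}
    (η : f₁ ⟶ f₂) (θ : g₁ ⟶ g₂) (η' : f₁' ⟶ f₂') (θ' : g₁' ⟶ g₂'),
    cell (η ▷ g₁ ≫ f₂ ◁ θ) (η' ▷ g₁' ≫ f₂' ◁ θ') =
      eqToHom (hom_comp f₁ g₁ f₁' g₁') ≫ (cell η η' ▷ hom g₁ g₁') ≫
        (hom f₂ f₂' ◁ cell θ θ') ≫ eqToHom (hom_comp f₂ g₂ f₂' g₂').symm
  assoc : ∀ (a b c : B), obj (obj a b) c = obj a (obj b c)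
  hom_assoc : ∀ {a a' b b' c c' : B} (f : a ⟶ a') (g : b ⟶ b') (k : c ⟶ c'),
    hom (hom f g) k ≫ eqToHom (assoc a' b' c') = eqToHom (assoc a b c) ≫ hom f (hom g k)

variable (T : Tensor2 B)

/-- The 2-functor "tensoring with `I` on the left", as a functor on hom-categories. -/
def lFun (I X Y : B) : (X ⟶ Y) ⥤ (T.obj I X ⟶ T.obj I Y) where
  obj f := T.hom (𝟙 I) f
  map η := T.cell (𝟙 (𝟙 I)) η
  map_id f := T.cell_id _ _
  map_comp {f g h} η θ := by
    have := T.cell_comp (𝟙 (𝟙 I)) (𝟙 (𝟙 I)) η θ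
    simpa using this

/-- The 2-functor "tensoring with `I` on the right", as a functor on hom-categories. -/
def rFun (I X Y : B) : (X ⟶ Y) ⥤ (T.obj X I ⟶ T.obj Y I) where
  obj f := T.hom f (𝟙 I)
  map η := T.cell η (𝟙 (𝟙 I))
  map_id f := T.cell_id _ _
  map_comp {f g h} η θ := by
    have := T.cell_comp η θ (𝟙 (𝟙 I)) (𝟙 (𝟙 I))
    simpa using this

/-- Cancellable object: tensoring with it on either side is fully faithful, i.e. induces
equivalences of hom-categories. -/
def Cancellable2 (I : B) : Prop :=
  (∀ X Y : B, (lFun T I X Y).IsEquivalence) ∧ (∀ X Y : B, (rFun T I X Y).IsEquivalence)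

/-- A unit object: a cancellable pseudo-idempotent. -/
def IsUnit2 (I : B) (α : T.obj I I ⟶ I) : Prop :=
  Cancellable2 T I ∧ IsEquiArrow α

end Two

open CategoryTheory Bicategory

section
variable {B : Type*} [Bicategory B] [Bicategory.Strict B] (T : Tensor2 B)

/-- Tensoring a square (a 1-cell of the arrow 2-category `C²`) on the left with an arrow
`i : I₀ ⟶ I₁`, viewed as an object of `C²`: the 2-cell component of the tensored square. -/
def tensorSqL {I₀ I₁ X₀ X₁ Y₀ Y₁ : B} (i : I₀ ⟶ I₁) (x : X₀ ⟶ X₁) (y : Y₀ ⟶ Y₁)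
    {f₀ : X₀ ⟶ Y₀} {f₁ : X₁ ⟶ Y₁} (F : f₀ ≫ y ⟶ x ≫ f₁) :
    T.hom (𝟙 I₀) f₀ ≫ T.hom i y ⟶ T.hom i x ≫ T.hom (𝟙 I₁) f₁ :=
  eqToHom (T.hom_comp (𝟙 I₀) i f₀ y).symm ≫
    T.cell (eqToHom (by rw [Category.id_comp, Category.comp_id] : 𝟙 I₀ ≫ i = i ≫ 𝟙 I₁)) F ≫
    eqToHom (T.hom_comp i (𝟙 I₁) x f₁)

/-- Tensoring a square on the right with an arrow `i : I₀ ⟶ I₁`. -/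
def tensorSqR {I₀ I₁ X₀ X₁ Y₀ Y₁ : B} (i : I₀ ⟶ I₁) (x : X₀ ⟶ X₁) (y : Y₀ ⟶ Y₁)
    {f₀ : X₀ ⟶ Y₀} {f₁ : X₁ ⟶ Y₁} (F : f₀ ≫ y ⟶ x ≫ f₁) :
    T.hom f₀ (𝟙 I₀) ≫ T.hom y i ⟶ T.hom x i ≫ T.hom f₁ (𝟙 I₁) :=
  eqToHom (T.hom_comp f₀ y (𝟙 I₀) i).symm ≫
    T.cell F (eqToHom (by rw [Category.id_comp, Category.comp_id] : 𝟙 I₀ ≫ i = i ≫ 𝟙 I₁)) ≫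
    eqToHom (T.hom_comp x f₁ i (𝟙 I₁))

end

lemma CategoryTheory.Bicategory.postcomp_faithful_of_comp_iso_id {B : Type*} [Bicategory B]
    (a : B) {b c : B} {h : b ⟶ c} {h' : c ⟶ b} (e : h ≫ h' ≅ 𝟙 b) : (postcomp a h).Faithful :=
  have : (postcomp a h ⋙ postcomp a h').Faithful := Functor.Faithful.of_iso
    (associatorNatIsoLeft a h h' ≪≫ (postcomposing a b b).mapIso e ≪≫ rightUnitorNatIso a b).symm
  Functor.Faithful.of_comp _ (postcomp a h')

namespace Tensor2

variable {B : Type*} [Bicategory B] [Bicategory.Strict B] (T : Tensor2 B)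

lemma cell_eqToHom {a b c d : B} {u u' : a ⟶ b} {v v' : c ⟶ d} (h : u = u') (h' : v = v') :
    T.cell (eqToHom h) (eqToHom h') = eqToHom (by rw [h, h']) := by
  subst h h'
  simpa using T.cell_id u v

lemma cell_id_eqToHom_conj {a b c d : B} (u : a ⟶ b) {v₁ v₁' v₂ v₂' : c ⟶ d} (h₁ : v₁ = v₁')
    (h₂ : v₂' = v₂) (η : v₁' ⟶ v₂') :
    T.cell (𝟙 u) (eqToHom h₁ ≫ η ≫ eqToHom h₂) =
      eqToHom (by rw [h₁]) ≫ T.cell (𝟙 u) η ≫ eqToHom (by rw [h₂]) := by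
  subst h₁ h₂
  simp

def cellIso {a b c d : B} {u u' : a ⟶ b} {v v' : c ⟶ d} (α : u ≅ u') (β : v ≅ v') :
    T.hom u v ≅ T.hom u' v' where
  hom := T.cell α.hom β.hom
  inv := T.cell α.inv β.inv
  hom_inv_id := by rw [← T.cell_comp]; simp [T.cell_id]
  inv_hom_id := by rw [← T.cell_comp]; simp [T.cell_id]

lemma cell_id_whiskerLeft {a b c a' b' c' : B} (u : a ⟶ b) (w : b ⟶ c)
    (f : a' ⟶ b') {g₁ g₂ : b' ⟶ c'} (θ : g₁ ⟶ g₂) :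
    T.cell (𝟙 (u ≫ w)) (f ◁ θ) =
      eqToHom (T.hom_comp u w f g₁) ≫ (T.hom u f ◁ T.cell (𝟙 w) θ) ≫
        eqToHom (T.hom_comp u w f g₂).symm := by
  simpa [T.cell_id] using T.cell_whisker (𝟙 u) (𝟙 w) (𝟙 f) θ

lemma cell_id_whiskerRight {a b c a' b' c' : B} (u : a ⟶ b) (w : b ⟶ c)
    {f₁ f₂ : a' ⟶ b'} (η : f₁ ⟶ f₂) (g : b' ⟶ c') :
    T.cell (𝟙 (u ≫ w)) (η ▷ g) =
      eqToHom (T.hom_comp u w f₁ g) ≫ (T.cell (𝟙 u) η ▷ T.hom w g) ≫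
        eqToHom (T.hom_comp u w f₂ g).symm := by
  simpa [T.cell_id] using T.cell_whisker (𝟙 u) (𝟙 w) η (𝟙 g)

def homFun {A A' : B} (f : A ⟶ A') (X Y : B) : (X ⟶ Y) ⥤ (T.obj A X ⟶ T.obj A' Y) where
  obj g := T.hom f g
  map η := T.cell (𝟙 f) η
  map_id g := T.cell_id f g
  map_comp η θ := by simpa using T.cell_comp (𝟙 f) (𝟙 f) η θ

def homFunIso {A A' : B} {f f' : A ⟶ A'} (α : f ≅ f') (X Y : B) :
    T.homFun f X Y ≅ T.homFun f' X Y :=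
  NatIso.ofComponents (fun g ↦ T.cellIso α (Iso.refl g)) fun η ↦ by
    simp [homFun, cellIso, ← T.cell_comp]

def homFunCompPostcompIso {A A' A'' : B} (f : A ⟶ A') (f' : A' ⟶ A'') (X Y : B) :
    T.homFun f X Y ⋙ postcomp _ (T.hom f' (𝟙 Y)) ≅ T.homFun (f ≫ f') X Y :=
  NatIso.ofComponents
    (fun g ↦ eqToIso (show T.hom f g ≫ T.hom f' (𝟙 Y) = T.hom (f ≫ f') g by
      rw [← T.hom_comp, Category.comp_id])) fun {g₁ g₂} η ↦ by
      have h := T.cell_id_whiskerRight f f' η (𝟙 Y)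
      simp only [Bicategory.whiskerRight_id, Bicategory.Strict.rightUnitor_eqToIso, eqToIso.hom,
        eqToIso.inv, cell_id_eqToHom_conj] at h
      rw [eqToHom_comp_iff, comp_eqToHom_iff] at h
      dsimp only [eqToIso, Functor.comp_map, postcomp_map, homFun]
      rw [h]
      simp only [Category.assoc, eqToHom_trans, eqToHom_trans_assoc]
      -- the middle objects agree only after unfolding `Functor.comp`
      erw [eqToHom_trans_assoc, eqToHom_refl, Category.id_comp]
      rfl

lemma homFun_full_faithful {I₀ I₁ : B} (hI₀ : ∀ X Y : B, (lFun T I₀ X Y).IsEquivalence)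
    {f : I₀ ⟶ I₁} (hf : IsEquiArrow f) (X Y : B) :
    (T.homFun f X Y).Full ∧ (T.homFun f X Y).Faithful := by
  obtain ⟨f', ⟨e₀⟩, ⟨e₁⟩⟩ := hf
  have c : T.homFun f X Y ⋙ postcomp _ (T.hom f' (𝟙 Y)) ≅ lFun T I₀ X Y :=
    T.homFunCompPostcompIso f f' X Y ≪≫ T.homFunIso e₀ X Y
  have : (postcomp (T.obj I₀ X) (T.hom f' (𝟙 Y))).Faithful :=
    Bicategory.postcomp_faithful_of_comp_iso_id _ (h' := T.hom f (𝟙 Y)) <|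
      eqToIso (T.hom_comp f' f (𝟙 Y) (𝟙 Y)).symm ≪≫
        T.cellIso e₁ (eqToIso (Category.comp_id (𝟙 Y))) ≪≫ eqToIso (T.hom_id I₁ Y)
  have := hI₀ X Y
  exact ⟨Functor.Full.of_comp_faithful_iso c, Functor.Faithful.of_comp_iso c⟩

lemma tensorSqL_eq_homFun_map {I₀ I₁ X₀ X₁ Y₀ Y₁ : B} (i : I₀ ⟶ I₁) (x : X₀ ⟶ X₁)
    (y : Y₀ ⟶ Y₁) {f₀ : X₀ ⟶ Y₀} {f₁ : X₁ ⟶ Y₁} (F : f₀ ≫ y ⟶ x ≫ f₁) :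
    tensorSqL T i x y F = eqToHom (T.hom_comp (𝟙 I₀) i f₀ y).symm ≫
      T.cell (𝟙 (𝟙 I₀ ≫ i)) F ≫
        eqToHom (by rw [Category.id_comp, ← T.hom_comp, Category.comp_id]) := by
  have e : 𝟙 I₀ ≫ i = i ≫ 𝟙 I₁ := by rw [Category.id_comp, Category.comp_id]
  have h : T.cell (eqToHom e) F = T.cell (𝟙 _) F ≫ T.cell (eqToHom e) (eqToHom rfl) := by
    rw [← T.cell_comp]; simp
  rw [tensorSqL, h, cell_eqToHom]
  simp

lemma tensorSqL_bijective {I₀ I₁ : B} (hI₀ : ∀ X Y : B, (lFun T I₀ X Y).IsEquivalence)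
    {i : I₀ ⟶ I₁} (hi : IsEquiArrow i) {X₀ X₁ Y₀ Y₁ : B} (x : X₀ ⟶ X₁) (y : Y₀ ⟶ Y₁)
    (f₀ : X₀ ⟶ Y₀) (f₁ : X₁ ⟶ Y₁) :
    Function.Bijective (tensorSqL T i x y (f₀ := f₀) (f₁ := f₁)) := by
  obtain ⟨hfull, hfaithful⟩ :=
    T.homFun_full_faithful hI₀ (f := 𝟙 I₀ ≫ i) (by rwa [Category.id_comp]) X₀ Y₁
  have : tensorSqL T i x y (f₀ := f₀) (f₁ := f₁) =
      (Iso.homCongr (eqToIso (T.hom_comp (𝟙 I₀) i f₀ y))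
        (eqToIso (show T.hom (𝟙 I₀ ≫ i) (x ≫ f₁) = T.hom i x ≫ T.hom (𝟙 I₁) f₁ by
          rw [Category.id_comp, ← T.hom_comp, Category.comp_id]))) ∘
        (T.homFun (𝟙 I₀ ≫ i) X₀ Y₁).map := by
    funext F
    exact T.tensorSqL_eq_homFun_map i x y F
  rw [this]
  exact (Iso.homCongr _ _).bijective.comp
    ((Functor.FullyFaithful.ofFullyFaithful _).map_bijective _ _)

lemma tensorSqL_comp_whiskerLeft {I₀ I₁ X₀ X₁ Y₀ Y₁ : B} (i : I₀ ⟶ I₁) (x : X₀ ⟶ X₁)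
    (y : Y₀ ⟶ Y₁) {f₀ : X₀ ⟶ Y₀} {f₁ g₁ : X₁ ⟶ Y₁} (F : f₀ ≫ y ⟶ x ≫ f₁) (a : f₁ ⟶ g₁) :
    tensorSqL T i x y (F ≫ x ◁ a) = tensorSqL T i x y F ≫ (T.hom i x ◁ T.cell (𝟙 (𝟙 I₁)) a) := by
  have e : 𝟙 I₀ ≫ i = i ≫ 𝟙 I₁ := by rw [Category.id_comp, Category.comp_id]
  have h : T.cell (eqToHom e) (F ≫ x ◁ a) = T.cell (eqToHom e) F ≫ T.cell (𝟙 _) (x ◁ a) := by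
    rw [← T.cell_comp]; simp
  rw [tensorSqL, tensorSqL, h, cell_id_whiskerLeft]
  simp

lemma tensorSqL_whiskerRight_comp {I₀ I₁ X₀ X₁ Y₀ Y₁ : B} (i : I₀ ⟶ I₁) (x : X₀ ⟶ X₁)
    (y : Y₀ ⟶ Y₁) {f₀ g₀ : X₀ ⟶ Y₀} {g₁ : X₁ ⟶ Y₁} (a : f₀ ⟶ g₀) (G : g₀ ≫ y ⟶ x ≫ g₁) :
    tensorSqL T i x y (a ▷ y ≫ G) = (T.cell (𝟙 (𝟙 I₀)) a ▷ T.hom i y) ≫ tensorSqL T i x y G := by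
  have e : 𝟙 I₀ ≫ i = i ≫ 𝟙 I₁ := by rw [Category.id_comp, Category.comp_id]
  have h : T.cell (eqToHom e) (a ▷ y ≫ G) = T.cell (𝟙 _) (a ▷ y) ≫ T.cell (eqToHom e) G := by
    rw [← T.cell_comp]; simp
  rw [tensorSqL, tensorSqL, h, cell_id_whiskerRight]
  simp

def swap : Tensor2 B where
  obj a b := T.obj b a
  hom f g := T.hom g f
  cell α β := T.cell β α
  hom_id a c := T.hom_id c a
  hom_comp f g f' g' := T.hom_comp f' g' f g
  cell_id f g := T.cell_id g f
  cell_comp η η' θ θ' := T.cell_comp θ θ' η η'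
  cell_whisker η θ η' θ' := T.cell_whisker η' θ' η θ
  assoc a b c := (T.assoc c b a).symm
  hom_assoc f g k := by
    rw [comp_eqToHom_iff, Category.assoc, T.hom_assoc k g f]
    simp

variable {T}

theorem tensorSqL_essSurj {I₀ I₁ : B} {i : I₀ ⟶ I₁}
    (hI₀ : ∀ X Y : B, (lFun T I₀ X Y).IsEquivalence)
    (hI₁ : ∀ X Y : B, (lFun T I₁ X Y).IsEquivalence) (hi : IsEquiArrow i)
    {X₀ X₁ Y₀ Y₁ : B} (x : X₀ ⟶ X₁) (y : Y₀ ⟶ Y₁)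
    (s₀ : T.obj I₀ X₀ ⟶ T.obj I₀ Y₀) (s₁ : T.obj I₁ X₁ ⟶ T.obj I₁ Y₁)
    (S : s₀ ≫ T.hom i y ⟶ T.hom i x ≫ s₁) :
    ∃ (k₀ : X₀ ⟶ Y₀) (k₁ : X₁ ⟶ Y₁) (K : k₀ ≫ y ⟶ x ≫ k₁)
      (m₀ : s₀ ≅ T.hom (𝟙 I₀) k₀) (m₁ : s₁ ≅ T.hom (𝟙 I₁) k₁),
      S ≫ (T.hom i x ◁ m₁.hom) = (m₀.hom ▷ T.hom i y) ≫ tensorSqL T i x y K := by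
  have := hI₀ X₀ Y₀
  have := hI₁ X₁ Y₁
  let m₀ : s₀ ≅ T.hom (𝟙 I₀) _ := ((lFun T I₀ X₀ Y₀).objObjPreimageIso s₀).symm
  let m₁ : s₁ ≅ T.hom (𝟙 I₁) _ := ((lFun T I₁ X₁ Y₁).objObjPreimageIso s₁).symm
  obtain ⟨K, hK⟩ := (T.tensorSqL_bijective hI₀ hi x y _ _).2
    ((m₀.inv ▷ T.hom i y) ≫ S ≫ (T.hom i x ◁ m₁.hom))
  refine ⟨_, _, K, m₀, m₁, ?_⟩
  rw [hK, ← comp_whiskerRight_assoc, m₀.hom_inv_id, id_whiskerRight, Category.id_comp]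

theorem tensorSqL_cylinder_existsUnique {I₀ I₁ : B} {i : I₀ ⟶ I₁}
    (hI₀ : ∀ X Y : B, (lFun T I₀ X Y).IsEquivalence)
    (hI₁ : ∀ X Y : B, (lFun T I₁ X Y).IsEquivalence) (hi : IsEquiArrow i)
    {X₀ X₁ Y₀ Y₁ : B} (x : X₀ ⟶ X₁) (y : Y₀ ⟶ Y₁) {p₀ q₀ : X₀ ⟶ Y₀} {p₁ q₁ : X₁ ⟶ Y₁}
    (P : p₀ ≫ y ⟶ x ≫ p₁) (Q : q₀ ≫ y ⟶ x ≫ q₁)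
    (n₀ : T.hom (𝟙 I₀) p₀ ⟶ T.hom (𝟙 I₀) q₀) (n₁ : T.hom (𝟙 I₁) p₁ ⟶ T.hom (𝟙 I₁) q₁)
    (hn : tensorSqL T i x y P ≫ (T.hom i x ◁ n₁) = (n₀ ▷ T.hom i y) ≫ tensorSqL T i x y Q) :
    ∃! m : (p₀ ⟶ q₀) × (p₁ ⟶ q₁),
      (P ≫ (x ◁ m.2) = (m.1 ▷ y) ≫ Q) ∧
      T.cell (𝟙 (𝟙 I₀)) m.1 = n₀ ∧ T.cell (𝟙 (𝟙 I₁)) m.2 = n₁ := by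
  have := hI₀ X₀ Y₀
  have := hI₁ X₁ Y₁
  obtain ⟨a₀, rfl⟩ := (lFun T I₀ X₀ Y₀).map_surjective n₀
  obtain ⟨a₁, rfl⟩ := (lFun T I₁ X₁ Y₁).map_surjective n₁
  refine ⟨(a₀, a₁), ⟨?_, rfl, rfl⟩, ?_⟩
  · apply (T.tensorSqL_bijective hI₀ hi x y _ _).1
    rw [tensorSqL_comp_whiskerLeft, tensorSqL_whiskerRight_comp]
    exact hn
  · rintro b ⟨-, hb₀, hb₁⟩
    exact Prod.ext ((lFun T I₀ X₀ Y₀).map_injective hb₀) ((lFun T I₁ X₁ Y₁).map_injective hb₁)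

end Tensor2

section
variable {B : Type*} [Bicategory B] [Bicategory.Strict B] (T : Tensor2 B)

/-- If `I₀` and `I₁` are cancellable objects of a strict semi-monoidal 2-category `C` and
`i : I₀ ⟶ I₁` is an equi-arrow, then `i`, viewed as an object of the arrow 2-category `C²`
(with its inherited tensor product), is cancellable: tensoring with `i` on either side is a
fully faithful 2-functor on `C²` (essentially surjective and bijective on cylinders, on each
hom-category of squares). -/
theorem arrow_of_cancellables_is_cancellable
    {I₀ I₁ : B} (i : I₀ ⟶ I₁)
    (hI₀ : Cancellable2 T I₀) (hI₁ : Cancellable2 T I₁) (hi : IsEquiArrow i) :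
    ∀ {X₀ X₁ Y₀ Y₁ : B} (x : X₀ ⟶ X₁) (y : Y₀ ⟶ Y₁),
      -- tensoring on the left is essentially surjective on hom-categories of squares
      ((∀ (s₀ : T.obj I₀ X₀ ⟶ T.obj I₀ Y₀) (s₁ : T.obj I₁ X₁ ⟶ T.obj I₁ Y₁)
          (S : s₀ ≫ T.hom i y ⟶ T.hom i x ≫ s₁),
          ∃ (k₀ : X₀ ⟶ Y₀) (k₁ : X₁ ⟶ Y₁) (K : k₀ ≫ y ⟶ x ≫ k₁)
            (m₀ : s₀ ≅ T.hom (𝟙 I₀) k₀) (m₁ : s₁ ≅ T.hom (𝟙 I₁) k₁),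
            S ≫ (T.hom i x ◁ m₁.hom) = (m₀.hom ▷ T.hom i y) ≫ tensorSqL T i x y K) ∧
      -- and fully faithful on cylinders
       (∀ (p₀ q₀ : X₀ ⟶ Y₀) (p₁ q₁ : X₁ ⟶ Y₁)
          (P : p₀ ≫ y ⟶ x ≫ p₁) (Q : q₀ ≫ y ⟶ x ≫ q₁)
          (n₀ : T.hom (𝟙 I₀) p₀ ⟶ T.hom (𝟙 I₀) q₀)
          (n₁ : T.hom (𝟙 I₁) p₁ ⟶ T.hom (𝟙 I₁) q₁),
          tensorSqL T i x y P ≫ (T.hom i x ◁ n₁) = (n₀ ▷ T.hom i y) ≫ tensorSqL T i x y Q →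
          ∃! m : (p₀ ⟶ q₀) × (p₁ ⟶ q₁),
            (P ≫ (x ◁ m.2) = (m.1 ▷ y) ≫ Q) ∧
            T.cell (𝟙 (𝟙 I₀)) m.1 = n₀ ∧ T.cell (𝟙 (𝟙 I₁)) m.2 = n₁)) ∧
      -- tensoring on the right is essentially surjective on hom-categories of squares
      ((∀ (s₀ : T.obj X₀ I₀ ⟶ T.obj Y₀ I₀) (s₁ : T.obj X₁ I₁ ⟶ T.obj Y₁ I₁)
          (S : s₀ ≫ T.hom y i ⟶ T.hom x i ≫ s₁),
          ∃ (k₀ : X₀ ⟶ Y₀) (k₁ : X₁ ⟶ Y₁) (K : k₀ ≫ y ⟶ x ≫ k₁)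
            (m₀ : s₀ ≅ T.hom k₀ (𝟙 I₀)) (m₁ : s₁ ≅ T.hom k₁ (𝟙 I₁)),
            S ≫ (T.hom x i ◁ m₁.hom) = (m₀.hom ▷ T.hom y i) ≫ tensorSqR T i x y K) ∧
      -- and fully faithful on cylinders
       (∀ (p₀ q₀ : X₀ ⟶ Y₀) (p₁ q₁ : X₁ ⟶ Y₁)
          (P : p₀ ≫ y ⟶ x ≫ p₁) (Q : q₀ ≫ y ⟶ x ≫ q₁)
          (n₀ : T.hom p₀ (𝟙 I₀) ⟶ T.hom q₀ (𝟙 I₀))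
          (n₁ : T.hom p₁ (𝟙 I₁) ⟶ T.hom q₁ (𝟙 I₁)),
          tensorSqR T i x y P ≫ (T.hom x i ◁ n₁) = (n₀ ▷ T.hom y i) ≫ tensorSqR T i x y Q →
          ∃! m : (p₀ ⟶ q₀) × (p₁ ⟶ q₁),
            (P ≫ (x ◁ m.2) = (m.1 ▷ y) ≫ Q) ∧
            T.cell m.1 (𝟙 (𝟙 I₀)) = n₀ ∧ T.cell m.2 (𝟙 (𝟙 I₁)) = n₁)) := by
  intro X₀ X₁ Y₀ Y₁ x y
  -- `lFun T.swap = rFun T` and `tensorSqL T.swap = tensorSqR T` hold definitionally.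
  exact ⟨⟨Tensor2.tensorSqL_essSurj hI₀.1 hI₁.1 hi x y,
      fun _ _ _ _ ↦ Tensor2.tensorSqL_cylinder_existsUnique hI₀.1 hI₁.1 hi x y⟩,
    ⟨Tensor2.tensorSqL_essSurj (T := T.swap) hI₀.2 hI₁.2 hi x y,
      fun _ _ _ _ ↦ Tensor2.tensorSqL_cylinder_existsUnique (T := T.swap) hI₀.2 hI₁.2 hi x y⟩⟩

end
end
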